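/- arXiv:1211.6876 — 2 statements merged into one kernel-verified Lean document; each statement's English description precedes it below -/
import Mathlib

section
/- If h ∈ A₊ is a fixed point of a Markov operator T and h ≤ y for some potential y of T, then h = 0. -/
open Filter Topology ContinuousLinearMap

namespace QMP

variable {H : Type*} [NormedAddCommGroup H] [InnerProductSpace ℂ H] [CompleteSpace H]

/-- `T` is a (quantum) Markov operator on the von Neumann algebra `A`:
a normal, unital, completely positive linear map leaving `A` invariant. -/
structure IsMarkov (A : VonNeumannAlgebra H) (T : (H →L[ℂ] H) → (H →L[ℂ] H)) : Prop where
  linear : IsLinearMap ℂ T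
  mapsSelf : ∀ x ∈ A, T x ∈ A
  unital : T 1 = 1
  cp : ∀ (n : ℕ) (a b : Fin n → (H →L[ℂ] H)),
    0 ≤ ∑ i : Fin n, ∑ j : Fin n, star (b i) * T (star (a i) * a j) * b j
  normal : ∀ {ι : Type} [Preorder ι] [IsDirected ι (· ≤ ·)] (f : ι → (H →L[ℂ] H))
    (y : H →L[ℂ] H), Monotone f → IsLUB (Set.range f) y →
      IsLUB (Set.range fun i => T (f i)) (T y)

/-- `y = ∑ₙ Tⁿ x` with convergence in the strong operator topology. -/
def SOTSum (T : (H →L[ℂ] H) → (H →L[ℂ] H)) (x y : H →L[ℂ] H) : Prop :=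
  ∀ η : H, Tendsto (fun N => ∑ n ∈ Finset.range N, (T^[n] x) η) atTop (𝓝 (y η))

/-- `x ∈ A₊` is `T`-summable: `∑ₙ Tⁿ x` converges strongly to an element of `A₊`. -/
def TSummable (A : VonNeumannAlgebra H) (T : (H →L[ℂ] H) → (H →L[ℂ] H))
    (x : H →L[ℂ] H) : Prop :=
  x ∈ A ∧ 0 ≤ x ∧ ∃ y, y ∈ A ∧ 0 ≤ y ∧ SOTSum T x y

/-- `y` is a potential for `T`: `y = ∑ₙ Tⁿ x` for some `x ∈ A₊`. -/
def IsPotential (A : VonNeumannAlgebra H) (T : (H →L[ℂ] H) → (H →L[ℂ] H))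
    (y : H →L[ℂ] H) : Prop :=
  y ∈ A ∧ 0 ≤ y ∧ ∃ x, x ∈ A ∧ 0 ≤ x ∧ SOTSum T x y

/-- `p` is an orthogonal projection belonging to `A`. -/
def IsProj (A : VonNeumannAlgebra H) (p : H →L[ℂ] H) : Prop :=
  p ∈ A ∧ IsSelfAdjoint p ∧ IsIdempotentElem p

/-- `p` is the support projection of the self-adjoint element `a`. -/
def IsSupport (A : VonNeumannAlgebra H) (a p : H →L[ℂ] H) : Prop :=
  IsProj A p ∧ a = p * a * p ∧ ∀ q, IsProj A q → a = q * a * q → p ≤ q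

/-- `s` is the supremum of the family of projections `q` in the projection lattice of `A`. -/
def IsProjSup (A : VonNeumannAlgebra H) {ι : Type*} (q : ι → (H →L[ℂ] H))
    (s : H →L[ℂ] H) : Prop :=
  IsProj A s ∧ (∀ i, q i ≤ s) ∧ ∀ r, IsProj A r → (∀ i, q i ≤ r) → s ≤ r

end QMP

/-!
The Loewner order is closed under strong limits, so the partial sums of a potential
`y = ∑ₙ Tⁿ x` increase to `y`. Normality of `T` then lets it pass through the series:
`T y = y - x`, hence `Tᴺ y = y - ∑_{n<N} Tⁿ x`. A fixed point `h ≤ y` satisfies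
`h = Tᴺ h ≤ Tᴺ y`, and the right-hand side tends strongly to `0`, so `h ≤ 0`.
-/

namespace ContinuousLinearMap

open scoped ComplexOrder

variable {𝕜 E : Type*} [RCLike 𝕜] [NormedAddCommGroup E] [InnerProductSpace 𝕜 E]
  {ι : Type*} {l : Filter ι} [l.NeBot] {f : ι → E →L[𝕜] E} {g : E →L[𝕜] E}

theorem IsPositive.of_tendsto_apply (hfg : ∀ x, Tendsto (fun i => f i x) l (𝓝 (g x)))
    (hf : ∀ᶠ i in l, (f i).IsPositive) : g.IsPositive := by
  rw [isPositive_iff]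
  refine ⟨fun x y => tendsto_nhds_unique ((hfg x).inner tendsto_const_nhds) ?_, fun x => ?_⟩
  · exact (tendsto_const_nhds.inner (hfg y)).congr'
      (hf.mono fun i hi => (hi.inner_left_eq_inner_right x y).symm)
  · exact ge_of_tendsto ((hfg x).inner tendsto_const_nhds)
      (hf.mono fun i hi => hi.inner_nonneg_left x)

theorem le_of_tendsto_apply {a : E →L[𝕜] E} (hfg : ∀ x, Tendsto (fun i => f i x) l (𝓝 (g x)))
    (hf : ∀ᶠ i in l, a ≤ f i) : a ≤ g :=
  IsPositive.of_tendsto_apply (fun x => (hfg x).sub_const (a x)) hf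

theorem ge_of_tendsto_apply {a : E →L[𝕜] E} (hfg : ∀ x, Tendsto (fun i => f i x) l (𝓝 (g x)))
    (hf : ∀ᶠ i in l, f i ≤ a) : g ≤ a :=
  IsPositive.of_tendsto_apply (fun x => (hfg x).const_sub (a x)) hf

theorem isLUB_of_tendsto_apply {ι : Type*} [Preorder ι] [IsDirected ι (· ≤ ·)] [Nonempty ι]
    {f : ι → E →L[𝕜] E} (hmono : Monotone f)
    (hfg : ∀ x, Tendsto (fun i => f i x) atTop (𝓝 (g x))) : IsLUB (Set.range f) g :=
  ⟨Set.forall_mem_range.2 fun i => le_of_tendsto_apply hfg (eventually_ge_atTop i |>.mono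
      fun _ hj => hmono hj),
    fun _ ha => ge_of_tendsto_apply hfg (Eventually.of_forall fun i => ha ⟨i, rfl⟩)⟩

end ContinuousLinearMap

theorem IsLinearMap.map_sum_range_iterate_add {R M : Type*} [Semiring R] [AddCommMonoid M]
    [Module R M] {f : M → M} (hf : IsLinearMap R f) (x : M) (N : ℕ) :
    f (∑ n ∈ Finset.range N, f^[n] x) + x = ∑ n ∈ Finset.range (N + 1), f^[n] x := by
  rw [Finset.sum_range_succ', ← IsLinearMap.mk'_apply hf, map_sum]
  simp [Function.iterate_succ_apply']

namespace QMP

variable {H : Type*} [NormedAddCommGroup H] [InnerProductSpace ℂ H]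
  {T : (H →L[ℂ] H) → (H →L[ℂ] H)}

theorem SOTSum.tendsto_apply {x y : H →L[ℂ] H} (hxy : SOTSum T x y) (η : H) :
    Tendsto (fun N => (∑ n ∈ Finset.range N, T^[n] x) η) atTop (𝓝 (y η)) := by
  simpa only [FunLike.coe_sum, Finset.sum_apply] using hxy η

namespace IsMarkov

variable [CompleteSpace H] {A : VonNeumannAlgebra H}

theorem map_nonneg (hT : IsMarkov A T) {z : H →L[ℂ] H} (hz : 0 ≤ z) : 0 ≤ T z := by
  rw [StarOrderedRing.nonneg_iff] at hz
  induction hz using AddSubmonoid.closure_induction with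
  | mem w hw =>
    obtain ⟨s, rfl⟩ := hw
    simpa using hT.cp 1 (fun _ => s) (fun _ => 1)
  | zero => rw [hT.linear.map_zero]
  | add a b _ _ iha ihb => rw [hT.linear.map_add]; exact add_nonneg iha ihb

theorem monotone (hT : IsMarkov A T) : Monotone T := fun a b hab => by
  simpa [hT.linear.map_sub] using hT.map_nonneg (sub_nonneg.mpr hab)

theorem monotone_sum_range_iterate (hT : IsMarkov A T) {x : H →L[ℂ] H} (hx : 0 ≤ x) :
    Monotone fun N => ∑ n ∈ Finset.range N, T^[n] x :=
  monotone_nat_of_le_succ fun N => by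
    simpa [Finset.sum_range_succ, Function.iterate_fixed hT.linear.map_zero]
      using hT.monotone.iterate N hx

theorem isLUB_sum_range_iterate (hT : IsMarkov A T) {x y : H →L[ℂ] H} (hx : 0 ≤ x)
    (hxy : SOTSum T x y) : IsLUB (Set.range fun N => ∑ n ∈ Finset.range N, T^[n] x) y :=
  ContinuousLinearMap.isLUB_of_tendsto_apply (hT.monotone_sum_range_iterate hx) hxy.tendsto_apply

theorem map_eq_sub_of_sotSum (hT : IsMarkov A T) {x y : H →L[ℂ] H} (hx : 0 ≤ x)
    (hxy : SOTSum T x y) : T y = y - x := by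
  have hshift : ∀ N, T (∑ n ∈ Finset.range N, T^[n] x) =
      (∑ n ∈ Finset.range (N + 1), T^[n] x) - x := fun N =>
    eq_sub_of_add_eq (hT.linear.map_sum_range_iterate_add x N)
  have hmono := hT.monotone_sum_range_iterate hx
  refine (hT.normal _ y hmono (hT.isLUB_sum_range_iterate hx hxy)).unique ?_
  simp only [hshift]
  exact ContinuousLinearMap.isLUB_of_tendsto_apply
    (fun _ _ hNM => sub_le_sub_right (hmono (Nat.succ_le_succ hNM)) x)
    fun η => ((hxy.tendsto_apply η).comp (tendsto_add_atTop_nat 1)).sub_const (x η)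

theorem iterate_eq_sub_of_sotSum (hT : IsMarkov A T) {x y : H →L[ℂ] H} (hx : 0 ≤ x)
    (hxy : SOTSum T x y) (N : ℕ) : T^[N] y = y - ∑ n ∈ Finset.range N, T^[n] x := by
  induction N with
  | zero => simp
  | succ N ih =>
    rw [Function.iterate_succ_apply', ih, hT.linear.map_sub, hT.map_eq_sub_of_sotSum hx hxy,
      ← hT.linear.map_sum_range_iterate_add x N]
    abel

end IsMarkov

end QMP

open QMP

theorem fixed_point_le_potential_eq_zero_general
    {H : Type*} [NormedAddCommGroup H] [InnerProductSpace ℂ H] [CompleteSpace H]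
    (A : VonNeumannAlgebra H) (T : (H →L[ℂ] H) → (H →L[ℂ] H)) (hT : IsMarkov A T)
    (h : H →L[ℂ] H) (h0 : 0 ≤ h) (hfix : T h = h)
    (y : H →L[ℂ] H) (hy : IsPotential A T y) (hle : h ≤ y) :
    h = 0 := by
  obtain ⟨-, -, x, -, hx0, hxy⟩ := hy
  have hle_tail : ∀ N, h ≤ y - ∑ n ∈ Finset.range N, T^[n] x := fun N =>
    calc h = T^[N] h := (Function.iterate_fixed hfix N).symm
      _ ≤ T^[N] y := hT.monotone.iterate N hle
      _ = _ := hT.iterate_eq_sub_of_sotSum hx0 hxy N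
  have hle_zero : h ≤ 0 := ContinuousLinearMap.le_of_tendsto_apply (g := 0)
    (fun η => by simpa using (hxy.tendsto_apply η).const_sub (y η))
    (Eventually.of_forall hle_tail)
  exact le_antisymm hle_zero h0

/-- A positive fixed point of `T` dominated by a potential vanishes. -/
theorem fixed_point_le_potential_eq_zero
    {H : Type*} [NormedAddCommGroup H] [InnerProductSpace ℂ H] [CompleteSpace H]
    (A : VonNeumannAlgebra H) (T : (H →L[ℂ] H) → (H →L[ℂ] H)) (hT : IsMarkov A T)
    (h : H →L[ℂ] H) (hmem : h ∈ A) (h0 : 0 ≤ h) (hfix : T h = h)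
    (y : H →L[ℂ] H) (hy : IsPotential A T y) (hle : h ≤ y) :
    h = 0 :=
  fixed_point_le_potential_eq_zero_general A T hT h h0 hfix y hy hle
end

section
/- Let T be a Markov operator on a von Neumann algebra A and x ∈ A₊ with support projection p := supp x. Then the support projection of T(x) equals the support projection of T(p). In particular, if x, y ∈ A₊ have equal supports then T(x) and T(y) have equal supports. -/
open Filter Topology ContinuousLinearMap

open QMP

/-!
Since `x ≤ ‖x‖ • p`, positivity of `T` gives `T x ≤ ‖x‖ • T p`, so every projection `e` with
`e (T p) e = T p` also satisfies `e (T x) e = T x`. Conversely, `gₙ = 1 - (1 + n x)⁻¹` increases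
to `p`: the resolvents `(1 + n x)⁻¹` are contractions that fix the kernel of `x` and tend strongly
to `0` on the range of `x`, which is dense in the range of `p`. As `gₙ ≤ n x`, each `T gₙ` lies in
the corner cut out by `supp (T x)`, and by normality of `T` so does their supremum `T p`. Supports
are determined by these corners, which gives both equalities.
-/

open scoped Ring

section Resolvent

variable {𝕜 B : Type*} [CommRing 𝕜] [Ring B] [Algebra 𝕜 B] {a : B} {t : 𝕜}

lemma one_sub_inverse_one_add_smul_eq_smul_inverse_mul (h : IsUnit (1 + t • a)) :
    1 - (1 + t • a)⁻¹ʳ = t • ((1 + t • a)⁻¹ʳ * a) := by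
  have := Ring.inverse_mul_cancel _ h
  rw [mul_add, mul_one, mul_smul_comm] at this
  exact sub_eq_of_eq_add' this.symm

lemma one_sub_inverse_one_add_smul_eq_smul_mul_inverse (h : IsUnit (1 + t • a)) :
    1 - (1 + t • a)⁻¹ʳ = t • (a * (1 + t • a)⁻¹ʳ) := by
  have := Ring.mul_inverse_cancel _ h
  rw [add_mul, one_mul, smul_mul_assoc] at this
  exact sub_eq_of_eq_add' this.symm

end Resolvent

section CStarAlgebra

variable {B : Type*} [CStarAlgebra B] [PartialOrder B] [StarOrderedRing B] {a b e : B}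

namespace IsStarProjection

lemma le_norm_smul_of_conjugate_eq (he : IsStarProjection e) (ha : 0 ≤ a)
    (hae : e * a * e = a) : a ≤ ‖a‖ • e := by
  have h := star_left_conjugate_le_conjugate
    (IsSelfAdjoint.of_nonneg ha).le_algebraMap_norm_self e
  rwa [he.isSelfAdjoint.star_eq, hae, Algebra.algebraMap_eq_smul_one, mul_smul_comm, mul_one,
    smul_mul_assoc, he.isIdempotentElem.eq] at h

lemma conjugate_eq_of_le_smul (he : IsStarProjection e) (ha : 0 ≤ a) {t : ℝ}
    (hat : a ≤ t • e) : e * a * e = a := by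
  rcases le_or_gt t 0 with ht | ht
  · have : a = 0 := le_antisymm (hat.trans (smul_nonpos_of_nonpos_of_nonneg ht he.nonneg)) ha
    simp [this]
  · have h := he.conjugate_of_nonneg_of_le (smul_nonneg (inv_nonneg.2 ht.le) ha)
      ((inv_smul_le_iff_of_pos ht).2 hat)
    rwa [mul_smul_comm, smul_mul_assoc, (smul_right_injective B (inv_ne_zero ht.ne')).eq_iff]
      at h

lemma conjugate_eq_of_le_of_conjugate_eq (he : IsStarProjection e) (ha : 0 ≤ a) (hab : a ≤ b)
    (hbe : e * b * e = b) : e * a * e = a :=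
  he.conjugate_eq_of_le_smul ha (hab.trans (he.le_norm_smul_of_conjugate_eq (ha.trans hab) hbe))

end IsStarProjection

lemma one_le_one_add_smul (ha : 0 ≤ a) {t : ℝ} (ht : 0 ≤ t) : 1 ≤ 1 + t • a :=
  le_add_of_nonneg_right (smul_nonneg ht ha)

lemma isUnit_one_add_smul (ha : 0 ≤ a) {t : ℝ} (ht : 0 ≤ t) : IsUnit (1 + t • a) :=
  CStarAlgebra.isUnit_of_le 1 (one_le_one_add_smul ha ht) isStrictlyPositive_one

lemma inverse_one_add_smul_nonneg (ha : 0 ≤ a) {t : ℝ} (ht : 0 ≤ t) : 0 ≤ (1 + t • a)⁻¹ʳ := by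
  obtain ⟨u, hu⟩ := isUnit_one_add_smul ha ht
  rw [← hu, Ring.inverse_unit]
  exact CFC.inv_nonneg_of_nonneg u
    (by rw [hu]; exact zero_le_one.trans (one_le_one_add_smul ha ht))

lemma inverse_one_add_smul_le_one (ha : 0 ≤ a) {t : ℝ} (ht : 0 ≤ t) : (1 + t • a)⁻¹ʳ ≤ 1 := by
  obtain ⟨u, hu⟩ := isUnit_one_add_smul ha ht
  rw [← hu, Ring.inverse_unit]
  exact CStarAlgebra.inv_le_one
    (by rw [← Units.val_le_val, Units.val_one, hu]; exact one_le_one_add_smul ha ht)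

lemma antitoneOn_inverse_one_add_smul (ha : 0 ≤ a) :
    AntitoneOn (fun t : ℝ => (1 + t • a)⁻¹ʳ) (Set.Ici 0) := by
  intro s hs t ht hst
  dsimp only
  obtain ⟨u, hu⟩ := isUnit_one_add_smul ha hs
  obtain ⟨v, hv⟩ := isUnit_one_add_smul ha ht
  rw [← hu, ← hv, Ring.inverse_unit, Ring.inverse_unit]
  refine CStarAlgebra.inv_le_inv ?_ ?_
  · rw [hu]
    exact zero_le_one.trans (one_le_one_add_smul ha hs)
  · rw [hu, hv]
    exact add_le_add_right (smul_le_smul_of_nonneg_right hst ha) 1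

lemma one_sub_inverse_one_add_smul_nonneg (ha : 0 ≤ a) {t : ℝ} (ht : 0 ≤ t) :
    0 ≤ 1 - (1 + t • a)⁻¹ʳ :=
  sub_nonneg.2 (inverse_one_add_smul_le_one ha ht)

lemma monotone_one_sub_inverse_one_add_smul (ha : 0 ≤ a) :
    Monotone fun n : ℕ => 1 - (1 + (n : ℝ) • a)⁻¹ʳ :=
  monotone_nat_of_le_succ fun n =>
    sub_le_sub_left (antitoneOn_inverse_one_add_smul ha (Set.mem_Ici.2 n.cast_nonneg)
      (Set.mem_Ici.2 (n + 1).cast_nonneg) (by simp)) 1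

lemma one_sub_inverse_one_add_smul_le (ha : 0 ≤ a) {t : ℝ} (ht : 0 ≤ t) :
    1 - (1 + t • a)⁻¹ʳ ≤ t • a := by
  have hu := isUnit_one_add_smul ha ht
  have hcorner : t • a - (1 - (1 + t • a)⁻¹ʳ) = (t * t) • (a * (1 + t • a)⁻¹ʳ * a) := by
    conv_lhs => rw [one_sub_inverse_one_add_smul_eq_smul_mul_inverse hu]
    rw [← smul_sub, ← mul_one_sub, one_sub_inverse_one_add_smul_eq_smul_inverse_mul hu,
      mul_smul_comm, smul_smul, mul_assoc]
  have hconj := star_left_conjugate_nonneg (inverse_one_add_smul_nonneg ha ht) a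
  rw [(IsSelfAdjoint.of_nonneg ha).star_eq] at hconj
  exact sub_nonneg.1 (hcorner ▸ smul_nonneg (mul_nonneg ht ht) hconj)

end CStarAlgebra

namespace ContinuousLinearMap

variable {E : Type*} [NormedAddCommGroup E] [InnerProductSpace ℂ E]

lemma le_of_tendsto_apply_s7 {ι : Type*} {l : Filter ι} [l.NeBot] {f f' : ι → E →L[ℂ] E}
    {g g' : E →L[ℂ] E} (hf : ∀ η, Tendsto (fun i => f i η) l (𝓝 (g η)))
    (hf' : ∀ η, Tendsto (fun i => f' i η) l (𝓝 (g' η))) (hle : ∀ᶠ i in l, f i ≤ f' i) :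
    g ≤ g' := by
  rw [le_def, isPositive_iff_complex]
  intro η
  have hclosed : IsClosed {z : ℂ | ((RCLike.re z : ℝ) : ℂ) = z ∧ 0 ≤ RCLike.re z} :=
    (isClosed_eq (Complex.continuous_ofReal.comp RCLike.continuous_re) continuous_id).inter
      (isClosed_le continuous_const RCLike.continuous_re)
  have hlim : Tendsto (fun i => inner ℂ ((f' i - f i) η) η) l (𝓝 (inner ℂ ((g' - g) η) η)) := by
    simpa only [sub_apply] using ((hf' η).sub (hf η)).inner tendsto_const_nhds
  exact hclosed.mem_of_tendsto hlim (hle.mono fun i hi => (isPositive_iff_complex _).1 hi η)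

lemma isLUB_range_of_monotone_of_tendsto_apply {ι : Type*} [Preorder ι] [Nonempty ι]
    [IsDirected ι (· ≤ ·)] {f : ι → E →L[ℂ] E} {g : E →L[ℂ] E} (hmono : Monotone f)
    (hf : ∀ η, Tendsto (fun i => f i η) atTop (𝓝 (g η))) : IsLUB (Set.range f) g := by
  refine ⟨?_, fun u hu => le_of_tendsto_apply_s7 hf (fun _ => tendsto_const_nhds)
    (Eventually.of_forall fun i => hu ⟨i, rfl⟩)⟩
  rintro _ ⟨i, rfl⟩
  exact le_of_tendsto_apply_s7 (fun _ => tendsto_const_nhds) hf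
    ((eventually_ge_atTop i).mono fun j hij => hmono hij)

end ContinuousLinearMap

section HilbertSpace

variable {H : Type*} [NormedAddCommGroup H] [InnerProductSpace ℂ H] [CompleteSpace H]

lemma tendsto_inverse_one_add_smul_apply_of_mem_closure_range {x : H →L[ℂ] H} (hx : 0 ≤ x)
    {ζ : H} (hζ : ζ ∈ closure (Set.range x)) :
    Tendsto (fun n : ℕ => (1 + (n : ℝ) • x)⁻¹ʳ ζ) atTop (𝓝 0) := by
  set R : ℕ → H →L[ℂ] H := fun n => (1 + (n : ℝ) • x)⁻¹ʳ
  have hR : ∀ n, ‖R n‖ ≤ 1 := fun n =>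
    (CStarAlgebra.norm_le_one_iff_of_nonneg _ (inverse_one_add_smul_nonneg hx n.cast_nonneg)).2
      (inverse_one_add_smul_le_one hx n.cast_nonneg)
  have hequi : Equicontinuous fun n => ⇑(R n) :=
    ((NormedSpace.equicontinuous_TFAE R).out 5 1).1 (⟨1, hR⟩ : ∃ C, ∀ n, ‖R n‖ ≤ C)
  refine closure_minimal ?_ (hequi.isClosed_setOfPred_tendsto continuous_const) hζ
  rintro _ ⟨θ, rfl⟩
  have hbound : ∀ n : ℕ, 1 ≤ n → ‖R n (x θ)‖ ≤ (n : ℝ)⁻¹ * ‖θ‖ := by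
    intro n hn
    have hn' : (n : ℝ) ≠ 0 := by positivity
    have h1 : R n * x = (n : ℝ)⁻¹ • (1 - R n) := by
      rw [one_sub_inverse_one_add_smul_eq_smul_inverse_mul (isUnit_one_add_smul hx n.cast_nonneg),
        smul_smul, inv_mul_cancel₀ hn', one_smul]
    have h2 : ‖1 - R n‖ ≤ 1 := (CStarAlgebra.norm_le_one_iff_of_nonneg _
      (one_sub_inverse_one_add_smul_nonneg hx n.cast_nonneg)).2
        (sub_le_self _ (inverse_one_add_smul_nonneg hx n.cast_nonneg))
    calc ‖R n (x θ)‖ = (n : ℝ)⁻¹ * ‖(1 - R n) θ‖ := by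
          rw [← mul_apply_eq_comp, h1, smul_apply, norm_smul, norm_inv, Real.norm_natCast]
      _ ≤ (n : ℝ)⁻¹ * ‖θ‖ := by
          gcongr
          simpa using (1 - R n).le_of_opNorm_le h2 θ
  refine squeeze_zero_norm' ((eventually_ge_atTop 1).mono hbound) ?_
  simpa using (tendsto_inv_atTop_zero.comp tendsto_natCast_atTop_atTop).mul_const ‖θ‖

namespace VonNeumannAlgebra

lemma starProjection_topologicalClosure_range_mem (S : VonNeumannAlgebra H) {x : H →L[ℂ] H}
    (hx : x ∈ S) : x.range.topologicalClosure.starProjection ∈ S := by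
  refine (IsStarProjection.mem_iff isStarProjection_starProjection S).2 fun y hy => ?_
  rw [Submodule.range_starProjection, Module.End.mem_invtSubmodule]
  refine Submodule.topologicalClosure_minimal _ ?_
    (x.range.isClosed_topologicalClosure.preimage y.continuous)
  rintro _ ⟨θ, rfl⟩
  refine Submodule.le_topologicalClosure _ ⟨y θ, ?_⟩
  change (x * y) θ = (y * x) θ
  rw [mem_commutant_iff.1 hy x hx]

end VonNeumannAlgebra

end HilbertSpace

namespace QMP

variable {H : Type*} [NormedAddCommGroup H] [InnerProductSpace ℂ H] [CompleteSpace H]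
  {A : VonNeumannAlgebra H}

lemma IsProj.isStarProjection {p : H →L[ℂ] H} (hp : IsProj A p) : IsStarProjection p :=
  ⟨hp.2.2, hp.2.1⟩

lemma IsSupport.eq_of_forall_conjugate_iff {a b p q : H →L[ℂ] H} (hp : IsSupport A a p)
    (hq : IsSupport A b q) (h : ∀ e, IsProj A e → (e * a * e = a ↔ e * b * e = b)) : p = q :=
  le_antisymm (hp.2.2 q hq.1 ((h q hq.1).2 hq.2.1.symm).symm)
    (hq.2.2 p hp.1 ((h p hp.1).1 hp.2.1.symm).symm)

lemma IsSupport.apply_mem_closure_range {x p : H →L[ℂ] H} (hxA : x ∈ A) (hx : IsSelfAdjoint x)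
    (hp : IsSupport A x p) (η : H) : p η ∈ closure (Set.range x) := by
  set K := x.range.topologicalClosure
  have he : IsStarProjection K.starProjection := isStarProjection_starProjection
  have hex : K.starProjection * x = x := ext fun θ =>
    Submodule.starProjection_eq_self_iff.2 (Submodule.le_topologicalClosure _ ⟨θ, rfl⟩)
  have hxe : x * K.starProjection = x := by
    simpa [hx.star_eq, he.isSelfAdjoint.star_eq] using congr(star $hex)
  have hpe : p ≤ K.starProjection :=
    hp.2.2 _ ⟨A.starProjection_topologicalClosure_range_mem hxA, he.isSelfAdjoint,
      he.isIdempotentElem⟩ (by rw [hex, hxe])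
  have hep : K.starProjection * p = p :=
    (he.mul_right_and_mul_left_of_nonneg_of_le hp.1.isStarProjection.nonneg hpe).2
  rw [← hep, mul_apply_eq_comp]
  exact K.starProjection_apply_mem _

lemma IsSupport.isLUB_range_one_sub_inverse_one_add_smul {x p : H →L[ℂ] H} (hxA : x ∈ A)
    (hx : 0 ≤ x) (hp : IsSupport A x p) :
    IsLUB (Set.range fun n : ℕ => 1 - (1 + (n : ℝ) • x)⁻¹ʳ) p := by
  refine isLUB_range_of_monotone_of_tendsto_apply
    (monotone_one_sub_inverse_one_add_smul hx) fun η => ?_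
  have hxp : x * p = x := by
    nth_rewrite 1 [hp.2.1]
    rw [mul_assoc, hp.1.isStarProjection.isIdempotentElem.eq, ← hp.2.1]
  have hker : ∀ n : ℕ, (1 - (1 + (n : ℝ) • x)⁻¹ʳ) (η - p η) = 0 := fun n => by
    rw [one_sub_inverse_one_add_smul_eq_smul_inverse_mul (isUnit_one_add_smul hx n.cast_nonneg),
      smul_apply, mul_apply_eq_comp, map_sub, ← mul_apply_eq_comp x p, hxp, sub_self, map_zero,
      smul_zero]
  have hsplit : ∀ n : ℕ, (1 - (1 + (n : ℝ) • x)⁻¹ʳ) η = p η - (1 + (n : ℝ) • x)⁻¹ʳ (p η) :=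
    fun n => by
      conv_lhs => rw [← add_sub_cancel (p η) η, map_add, hker, add_zero]
      rw [sub_apply, one_apply_eq_self]
  simpa [hsplit] using tendsto_const_nhds.sub
    (tendsto_inverse_one_add_smul_apply_of_mem_closure_range hx
      (hp.apply_mem_closure_range hxA hx.isSelfAdjoint η))

namespace IsMarkov

variable {T : (H →L[ℂ] H) → (H →L[ℂ] H)} (hT : IsMarkov A T)
include hT

lemma map_nonneg_s7 {a : H →L[ℂ] H} (ha : 0 ≤ a) : 0 ≤ T a := by
  obtain ⟨s, rfl⟩ := CStarAlgebra.nonneg_iff_eq_star_mul_self.1 ha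
  simpa using hT.cp 1 (fun _ => s) (fun _ => 1)

lemma monotone_s7 : Monotone T := fun a b hab => by
  simpa [hT.linear.map_sub] using hT.map_nonneg_s7 (sub_nonneg.2 hab)

lemma map_smul_real (t : ℝ) (a : H →L[ℂ] H) : T (t • a) = t • T a := by
  rw [← algebraMap_smul ℂ t a, hT.linear.map_smul, algebraMap_smul]

lemma conjugate_map_eq_of_le_smul {a b e : H →L[ℂ] H} (ha : 0 ≤ a) {t : ℝ} (hab : a ≤ t • b)
    (he : IsStarProjection e) (hb : e * T b * e = T b) : e * T a * e = T a :=
  he.conjugate_eq_of_le_of_conjugate_eq (hT.map_nonneg_s7 ha)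
    (hT.map_smul_real t b ▸ hT.monotone_s7 hab) (by rw [mul_smul_comm, smul_mul_assoc, hb])

lemma conjugate_map_eq_of_isLUB {ι : Type} [Preorder ι] [IsDirected ι (· ≤ ·)]
    {f : ι → H →L[ℂ] H} {y e : H →L[ℂ] H} (hf : Monotone f) (hy : IsLUB (Set.range f) y)
    (hy₀ : 0 ≤ y) (he : IsStarProjection e) (h : ∀ i, e * T (f i) * e = T (f i)) :
    e * T y * e = T y := by
  have hlub := hT.normal f y hf hy
  have hle : T y ≤ e * T y * e := hlub.2 <| by
    rintro _ ⟨i, rfl⟩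
    have := star_left_conjugate_le_conjugate (hlub.1 ⟨i, rfl⟩) e
    rwa [he.isSelfAdjoint.star_eq, h i] at this
  refine he.conjugate_eq_of_le_of_conjugate_eq (hT.map_nonneg_s7 hy₀) hle ?_
  simp only [← mul_assoc, he.isIdempotentElem.eq]
  rw [mul_assoc, he.isIdempotentElem.eq]

lemma conjugate_map_eq_iff_conjugate_map_support {x p e : H →L[ℂ] H} (hxA : x ∈ A) (hx : 0 ≤ x)
    (hp : IsSupport A x p) (he : IsStarProjection e) :
    e * T x * e = T x ↔ e * T p * e = T p := by
  refine ⟨fun h => ?_, hT.conjugate_map_eq_of_le_smul hx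
    (hp.1.isStarProjection.le_norm_smul_of_conjugate_eq hx hp.2.1.symm) he⟩
  have hg : ∀ n : ℕ,
      e * T (1 - (1 + (n : ℝ) • x)⁻¹ʳ) * e = T (1 - (1 + (n : ℝ) • x)⁻¹ʳ) := fun n =>
    hT.conjugate_map_eq_of_le_smul (one_sub_inverse_one_add_smul_nonneg hx n.cast_nonneg)
      (one_sub_inverse_one_add_smul_le hx n.cast_nonneg) he h
  exact hT.conjugate_map_eq_of_isLUB (monotone_one_sub_inverse_one_add_smul hx)
    (hp.isLUB_range_one_sub_inverse_one_add_smul hxA hx) hp.1.isStarProjection.nonneg he hg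

end IsMarkov

end QMP

/-- For `x ∈ A₊` with support projection `p`, the supports of `T x` and `T p` coincide.
In particular, positive elements with equal supports have images with equal supports. -/
theorem support_map_eq_support_map_of_support
    {H : Type*} [NormedAddCommGroup H] [InnerProductSpace ℂ H] [CompleteSpace H]
    (A : VonNeumannAlgebra H) (T : (H →L[ℂ] H) → (H →L[ℂ] H)) (hT : IsMarkov A T) :
    (∀ x p q r, x ∈ A → 0 ≤ x → IsSupport A x p →
      IsSupport A (T x) q → IsSupport A (T p) r → q = r) ∧
    (∀ x y p q q', x ∈ A → 0 ≤ x → y ∈ A → 0 ≤ y →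
      IsSupport A x p → IsSupport A y p →
      IsSupport A (T x) q → IsSupport A (T y) q' → q = q') := by
  have hcorner : ∀ x p, x ∈ A → 0 ≤ x → IsSupport A x p →
      ∀ e, IsProj A e → (e * T x * e = T x ↔ e * T p * e = T p) := fun x p hxA hx hp e he =>
    hT.conjugate_map_eq_iff_conjugate_map_support hxA hx hp he.isStarProjection
  refine ⟨fun x p q r hxA hx hp hq hr =>
    hq.eq_of_forall_conjugate_iff hr (hcorner x p hxA hx hp), ?_⟩
  intro x y p q q' hxA hx hyA hy hpx hpy hq hq'
  exact hq.eq_of_forall_conjugate_iff hq' fun e he =>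
    (hcorner x p hxA hx hpx e he).trans (hcorner y p hyA hy hpy e he).symm
end
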